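/- Define eff : (0,1) → ℝ by eff(a) = a · (Φ^{−1}(1 − a/2))^{1/2}, where Φ^{−1} is the inverse of the standard normal cumulative distribution function (note Φ^{−1}(1 − a/2) > 0 for a ∈ (0,1)). Then eff attains a maximum on (0,1), and every maximizer a* satisfies 0.6505 < a* < 0.6515; i.e., the asymptotically optimal HMC acceptance probability, rounded to three decimal places, equals 0.651. -/

import Mathlib

/-!
Substituting `a = 2 (1 - Φ x)` maps `x ∈ (0, ∞)` bijectively onto `(0, 1)` and turns `eff` into
`g x = 2 (1 - Φ x) √x`, whose derivative is `((1 - Φ x) - 2 x φ x) / √x`. The bracket has derivative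
`φ x (2 x² - 3)`, so it decreases on `[0, 1]`, and it is negative for `x > 1` by Mills' inequality
`1 - Φ x ≤ φ x / x`; hence `g` increases up to its unique critical point and decreases afterwards.
Degree-8 Taylor bounds for `e^{-u²/2}`, integrated termwise, place the sign change of the bracket
in `(0.4519, 0.4525)`, and the same bounds give `0.67425 < Φ 0.4519` and `Φ 0.4525 < 0.67475`,
which is `0.6505 < a* < 0.6515`.
-/

open MeasureTheory

/-- The standard normal cumulative distribution function. -/
noncomputable def stdNormalCDF (t : ℝ) : ℝ :=
  (Real.sqrt (2 * Real.pi))⁻¹ * ∫ u in Set.Iic t, Real.exp (-u ^ 2 / 2)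

/-- The efficiency function `eff(a) = a·(Φ⁻¹(1 - a/2))^{1/2}` of the paper
(formula `eq:auxiliar`, up to the target-dependent constant `√2/Σ^{1/4}`). -/
noncomputable def eff (a : ℝ) : ℝ :=
  a * Real.sqrt (Function.invFun stdNormalCDF (1 - a / 2))

open Real Set Filter Topology

section Unimodal

variable {g : ℝ → ℝ} {l p q : ℝ}

lemma exists_isMaxOn_Ioi_of_strictMonoOn_of_strictAntiOn (hpq : p ≤ q)
    (hg : ContinuousOn g (Icc p q)) (hmono : StrictMonoOn g (Ioc l p))
    (hanti : StrictAntiOn g (Ici q)) : ∃ x ∈ Icc p q, IsMaxOn g (Ioi l) x := by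
  obtain ⟨x, hx, hmax⟩ := isCompact_Icc.exists_isMaxOn (nonempty_Icc.2 hpq) hg
  refine ⟨x, hx, fun y (hy : l < y) => ?_⟩
  rcases le_or_gt y p with hyp | hpy
  · exact (hmono.monotoneOn ⟨hy, hyp⟩ ⟨hy.trans_le hyp, le_rfl⟩ hyp).trans (hmax ⟨le_rfl, hpq⟩)
  rcases le_or_gt y q with hyq | hqy
  · exact hmax ⟨hpy.le, hyq⟩
  · exact (hanti.antitoneOn self_mem_Ici (mem_Ici.2 hqy.le) hqy.le).trans (hmax ⟨hpq, le_rfl⟩)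

lemma mem_Icc_of_isMaxOn_Ioi_of_strictMonoOn_of_strictAntiOn (hlp : l < p) (hpq : p ≤ q)
    (hmono : StrictMonoOn g (Ioc l p)) (hanti : StrictAntiOn g (Ici q)) {x : ℝ} (hx : l < x)
    (hmax : IsMaxOn g (Ioi l) x) : x ∈ Icc p q := by
  constructor
  · by_contra! hxp
    exact (hmono ⟨hx, hxp.le⟩ ⟨hlp, le_rfl⟩ hxp).not_ge (hmax (mem_Ioi.2 hlp))
  · by_contra! hqx
    exact (hanti self_mem_Ici (mem_Ici.2 hqx.le) hqx).not_ge
      (hmax (mem_Ioi.2 (hlp.trans_le hpq)))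

end Unimodal

noncomputable def stdNormalPDF (t : ℝ) : ℝ := (√(2 * π))⁻¹ * exp (-t ^ 2 / 2)

lemma stdNormalPDF_pos (t : ℝ) : 0 < stdNormalPDF t := by
  unfold stdNormalPDF; positivity

lemma continuous_stdNormalPDF : Continuous stdNormalPDF := by
  unfold stdNormalPDF; fun_prop

lemma hasDerivAt_stdNormalPDF (t : ℝ) : HasDerivAt stdNormalPDF (-t * stdNormalPDF t) t := by
  have h : HasDerivAt (fun s : ℝ => -s ^ 2 / 2) (-t) t :=
    (((hasDerivAt_pow 2 t).neg).div_const 2).congr_deriv (by ring)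
  exact (h.exp.const_mul (√(2 * π))⁻¹).congr_deriv (by rw [stdNormalPDF]; ring)

lemma stdNormalPDF_neg (t : ℝ) : stdNormalPDF (-t) = stdNormalPDF t := by
  simp [stdNormalPDF]

lemma stdNormalPDF_eq_mul_exp_neg_mul_sq (t : ℝ) :
    stdNormalPDF t = (√(2 * π))⁻¹ * exp (-(1 / 2) * t ^ 2) := by
  rw [stdNormalPDF]; ring_nf

lemma integrable_stdNormalPDF : Integrable stdNormalPDF := by
  rw [funext stdNormalPDF_eq_mul_exp_neg_mul_sq]
  exact (integrable_exp_neg_mul_sq (by norm_num : (0 : ℝ) < 1 / 2)).const_mul _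

lemma integrable_mul_stdNormalPDF : Integrable fun t => t * stdNormalPDF t := by
  convert (integrable_mul_exp_neg_mul_sq (by norm_num : (0 : ℝ) < 1 / 2)).const_mul
    (√(2 * π))⁻¹ using 2 with t
  rw [stdNormalPDF_eq_mul_exp_neg_mul_sq]; ring

lemma integral_Ioi_zero_stdNormalPDF : ∫ t in Ioi 0, stdNormalPDF t = 1 / 2 := by
  have h2pi : √(2 * π) ≠ 0 := by positivity
  simp only [stdNormalPDF_eq_mul_exp_neg_mul_sq, integral_const_mul, integral_gaussian_Ioi,
    div_div_eq_mul_div, div_one, mul_comm π 2]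
  field_simp

lemma integral_Iic_zero_stdNormalPDF : ∫ t in Iic 0, stdNormalPDF t = 1 / 2 := by
  simpa [stdNormalPDF_neg, integral_Ioi_zero_stdNormalPDF] using
    integral_comp_neg_Iic 0 stdNormalPDF

lemma integral_stdNormalPDF : ∫ t, stdNormalPDF t = 1 := by
  rw [← intervalIntegral.integral_Iic_add_Ioi (b := 0) integrable_stdNormalPDF.integrableOn
    integrable_stdNormalPDF.integrableOn, integral_Iic_zero_stdNormalPDF,
    integral_Ioi_zero_stdNormalPDF]
  norm_num

lemma integral_Ioi_mul_stdNormalPDF (x : ℝ) :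
    ∫ t in Ioi x, t * stdNormalPDF t = stdNormalPDF x := by
  have hderiv (t : ℝ) (_ : t ∈ Ici x) :
      HasDerivAt (-stdNormalPDF) (t * stdNormalPDF t) t := by
    simpa using (hasDerivAt_stdNormalPDF t).neg
  have hlim : Tendsto (-stdNormalPDF) atTop (𝓝 0) := by
    have h : Tendsto (fun t : ℝ => -t ^ 2 / 2) atTop atBot :=
      (tendsto_neg_atTop_atBot.comp (tendsto_pow_atTop two_ne_zero)).atBot_div_const two_pos
    show Tendsto (fun s => -((√(2 * π))⁻¹ * exp (-s ^ 2 / 2))) atTop (𝓝 0)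
    simpa only [mul_zero, neg_zero, Function.comp_def] using
      ((tendsto_exp_atBot.comp h).const_mul (√(2 * π))⁻¹).neg
  rw [integral_Ioi_of_hasDerivAt_of_tendsto' hderiv integrable_mul_stdNormalPDF.integrableOn hlim]
  simp

lemma stdNormalCDF_eq_integral (t : ℝ) : stdNormalCDF t = ∫ u in Iic t, stdNormalPDF u := by
  rw [stdNormalCDF, ← integral_const_mul]; rfl

lemma stdNormalCDF_eq_half_add (t : ℝ) :
    stdNormalCDF t = 1 / 2 + ∫ u in 0..t, stdNormalPDF u := by
  rw [← intervalIntegral.integral_Iic_sub_Iic integrable_stdNormalPDF.integrableOn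
    integrable_stdNormalPDF.integrableOn, integral_Iic_zero_stdNormalPDF, stdNormalCDF_eq_integral]
  ring

lemma one_sub_stdNormalCDF (t : ℝ) : 1 - stdNormalCDF t = ∫ u in Ioi t, stdNormalPDF u := by
  rw [← integral_stdNormalPDF, ← intervalIntegral.integral_Iic_add_Ioi (b := t)
    integrable_stdNormalPDF.integrableOn integrable_stdNormalPDF.integrableOn,
    stdNormalCDF_eq_integral]
  ring

lemma stdNormalCDF_zero : stdNormalCDF 0 = 1 / 2 := by
  simp [stdNormalCDF_eq_half_add]

lemma hasDerivAt_stdNormalCDF (t : ℝ) : HasDerivAt stdNormalCDF (stdNormalPDF t) t := by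
  rw [funext stdNormalCDF_eq_half_add]
  exact (intervalIntegral.integral_hasDerivAt_right
    (continuous_stdNormalPDF.intervalIntegrable 0 t)
    (continuous_stdNormalPDF.stronglyMeasurableAtFilter _ _)
    continuous_stdNormalPDF.continuousAt).const_add _

lemma continuous_stdNormalCDF : Continuous stdNormalCDF :=
  continuous_iff_continuousAt.2 fun t => (hasDerivAt_stdNormalCDF t).continuousAt

lemma strictMono_stdNormalCDF : StrictMono stdNormalCDF :=
  strictMono_of_hasDerivAt_pos hasDerivAt_stdNormalCDF stdNormalPDF_pos

lemma tendsto_stdNormalCDF_atTop : Tendsto stdNormalCDF atTop (𝓝 1) := by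
  have h := intervalIntegral_tendsto_integral_Ioi 0 integrable_stdNormalPDF.integrableOn tendsto_id
  rw [integral_Ioi_zero_stdNormalPDF] at h
  rw [funext stdNormalCDF_eq_half_add]
  convert h.const_add (1 / 2) using 2 <;> norm_num

lemma stdNormalCDF_lt_one (t : ℝ) : stdNormalCDF t < 1 :=
  (strictMono_stdNormalCDF (lt_add_one t)).trans_le
    (strictMono_stdNormalCDF.monotone.ge_of_tendsto tendsto_stdNormalCDF_atTop _)

lemma exists_pos_stdNormalCDF_eq {y : ℝ} (hy : y ∈ Ioo (1 / 2) 1) :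
    ∃ x > 0, stdNormalCDF x = y := by
  obtain ⟨b, hb⟩ := (tendsto_stdNormalCDF_atTop.eventually (eventually_gt_nhds hy.2)).exists
  have hb0 : 0 ≤ b := by
    by_contra! h
    linarith [strictMono_stdNormalCDF h, stdNormalCDF_zero, hy.1]
  obtain ⟨x, hx, rfl⟩ := intermediate_value_Ioo hb0 continuous_stdNormalCDF.continuousOn
    (show y ∈ Ioo (stdNormalCDF 0) (stdNormalCDF b) by rw [stdNormalCDF_zero]; exact ⟨hy.1, hb⟩)
  exact ⟨x, hx.1, rfl⟩

lemma one_sub_stdNormalCDF_le {x : ℝ} (hx : 0 < x) :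
    1 - stdNormalCDF x ≤ stdNormalPDF x / x := by
  rw [one_sub_stdNormalCDF, ← integral_Ioi_mul_stdNormalPDF, ← integral_div]
  refine setIntegral_mono_on integrable_stdNormalPDF.integrableOn
    (integrable_mul_stdNormalPDF.div_const x).integrableOn measurableSet_Ioi fun t ht => ?_
  rw [le_div_iff₀ hx]
  nlinarith [stdNormalPDF_pos t, mem_Ioi.1 ht]

/-- `eff a` in the variable `x = Φ⁻¹(1 - a / 2)`, i.e. `a = 2 (1 - Φ x)`. -/
noncomputable def effQuantile (x : ℝ) : ℝ := 2 * (1 - stdNormalCDF x) * √x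

lemma eff_two_mul_one_sub_stdNormalCDF (x : ℝ) :
    eff (2 * (1 - stdNormalCDF x)) = effQuantile x := by
  rw [eff, effQuantile, show 1 - 2 * (1 - stdNormalCDF x) / 2 = stdNormalCDF x by ring,
    Function.leftInverse_invFun strictMono_stdNormalCDF.injective x]

lemma two_mul_one_sub_stdNormalCDF_mem {x : ℝ} (hx : 0 < x) :
    2 * (1 - stdNormalCDF x) ∈ Ioo 0 1 := by
  have := strictMono_stdNormalCDF hx
  rw [stdNormalCDF_zero] at this
  constructor <;> linarith [stdNormalCDF_lt_one x]

lemma exists_two_mul_one_sub_stdNormalCDF_eq {a : ℝ} (ha : a ∈ Ioo 0 1) :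
    ∃ x > 0, 2 * (1 - stdNormalCDF x) = a := by
  obtain ⟨x, hx, hΦ⟩ :=
    exists_pos_stdNormalCDF_eq (y := 1 - a / 2) ⟨by linarith [ha.2], by linarith [ha.1]⟩
  exact ⟨x, hx, by rw [hΦ]; ring⟩

lemma isMaxOn_effQuantile_iff {x : ℝ} :
    (∀ b ∈ Ioo (0 : ℝ) 1, eff b ≤ eff (2 * (1 - stdNormalCDF x))) ↔
      IsMaxOn effQuantile (Ioi 0) x := by
  rw [eff_two_mul_one_sub_stdNormalCDF]
  constructor
  · intro h y hy
    simpa [eff_two_mul_one_sub_stdNormalCDF] using h _ (two_mul_one_sub_stdNormalCDF_mem hy)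
  · intro h b hb
    obtain ⟨y, hy, rfl⟩ := exists_two_mul_one_sub_stdNormalCDF_eq hb
    rw [eff_two_mul_one_sub_stdNormalCDF]
    exact h hy

noncomputable def stationarityGap (x : ℝ) : ℝ :=
  (1 - stdNormalCDF x) - 2 * x * stdNormalPDF x

lemma hasDerivAt_effQuantile {x : ℝ} (hx : 0 < x) :
    HasDerivAt effQuantile ((√x)⁻¹ * stationarityGap x) x := by
  have h := (((hasDerivAt_stdNormalCDF x).const_sub 1).const_mul 2).mul (hasDerivAt_sqrt hx.ne')
  refine h.congr_deriv ?_
  have hsx : √x ≠ 0 := (sqrt_pos.2 hx).ne'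
  rw [stationarityGap]
  field_simp
  rw [sq_sqrt hx.le]
  ring

lemma hasDerivAt_stationarityGap (x : ℝ) :
    HasDerivAt stationarityGap (stdNormalPDF x * (2 * x ^ 2 - 3)) x := by
  have h := ((hasDerivAt_stdNormalCDF x).const_sub 1).sub
    (((hasDerivAt_id' x).const_mul 2).mul (hasDerivAt_stdNormalPDF x))
  exact h.congr_deriv (by ring)

lemma strictAntiOn_stationarityGap : StrictAntiOn stationarityGap (Icc 0 1) := by
  refine strictAntiOn_of_deriv_neg (convex_Icc 0 1)
    (fun x _ => (hasDerivAt_stationarityGap x).continuousAt.continuousWithinAt) fun x hx => ?_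
  rw [interior_Icc] at hx
  rw [(hasDerivAt_stationarityGap x).deriv]
  exact mul_neg_of_pos_of_neg (stdNormalPDF_pos x) (by nlinarith [hx.1, hx.2])

lemma stationarityGap_neg_of_one_lt {x : ℝ} (hx : 1 < x) : stationarityGap x < 0 := by
  have hmills := one_sub_stdNormalCDF_le (zero_lt_one.trans hx)
  have hφ := stdNormalPDF_pos x
  have : stdNormalPDF x / x < stdNormalPDF x := div_lt_self hφ hx
  rw [stationarityGap]
  nlinarith

lemma abs_exp_neg_half_sq_sub_le {u : ℝ} (hu : u ^ 2 ≤ 2) :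
    |exp (-u ^ 2 / 2) - (1 - u ^ 2 / 2 + u ^ 4 / 8 - u ^ 6 / 48 + u ^ 8 / 384)| ≤
      u ^ 10 / 3200 := by
  have ht : |-(u ^ 2 / 2)| ≤ 1 := by rw [abs_neg, abs_of_nonneg (by positivity)]; linarith
  have h := Real.exp_bound ht (n := 5) (by norm_num)
  have hsum : ∑ m ∈ Finset.range 5, (-(u ^ 2 / 2)) ^ m / m.factorial =
      1 - u ^ 2 / 2 + u ^ 4 / 8 - u ^ 6 / 48 + u ^ 8 / 384 := by
    simp only [Finset.sum_range_succ, Finset.sum_range_zero, Nat.factorial]; push_cast; ring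
  rw [hsum, abs_neg (u ^ 2 / 2), abs_of_nonneg (show 0 ≤ u ^ 2 / 2 by positivity),
    ← neg_div] at h
  exact h.trans_eq (by norm_num [Nat.factorial]; ring)

lemma abs_integral_exp_neg_half_sq_sub_le {x : ℝ} (hx₀ : 0 ≤ x) (hx₁ : x ≤ 1) :
    |(∫ u in 0..x, exp (-u ^ 2 / 2)) -
        (x - x ^ 3 / 6 + x ^ 5 / 40 - x ^ 7 / 336 + x ^ 9 / 3456)| ≤ x ^ 11 / 35200 := by
  have htaylor : ∫ u in 0..x, (1 - u ^ 2 / 2 + u ^ 4 / 8 - u ^ 6 / 48 + u ^ 8 / 384) =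
      x - x ^ 3 / 6 + x ^ 5 / 40 - x ^ 7 / 336 + x ^ 9 / 3456 := by
    simp (disch := (apply Continuous.intervalIntegrable; fun_prop)) only
      [intervalIntegral.integral_add, intervalIntegral.integral_sub,
        intervalIntegral.integral_const, intervalIntegral.integral_div, integral_pow, smul_eq_mul]
    ring
  have hrem : ∫ u in 0..x, u ^ 10 / 3200 = x ^ 11 / 35200 := by
    rw [intervalIntegral.integral_div, integral_pow]; ring
  rw [← htaylor, ← hrem, ← intervalIntegral.integral_sub, ← Real.norm_eq_abs]
  refine intervalIntegral.norm_integral_le_of_norm_le hx₀ (ae_of_all _ fun u hu => ?_) ?_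
  · exact abs_exp_neg_half_sq_sub_le (by nlinarith [hu.1, hu.2])
  all_goals exact Continuous.intervalIntegrable (by fun_prop) _ _

lemma sqrt_two_pi_mem : √(2 * π) ∈ Ioo 2.506628 2.5066285 := by
  constructor
  · rw [lt_sqrt (by norm_num)]; nlinarith [pi_gt_d6]
  · rw [sqrt_lt' (by norm_num)]; nlinarith [pi_lt_d6]

lemma stdNormalCDF_eq_half_add_div (x : ℝ) :
    stdNormalCDF x = 1 / 2 + (∫ u in 0..x, exp (-u ^ 2 / 2)) / √(2 * π) := by
  simp only [stdNormalCDF_eq_half_add, stdNormalPDF, intervalIntegral.integral_const_mul]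
  ring

lemma stationarityGap_eq (x : ℝ) :
    stationarityGap x =
      1 / 2 - ((∫ u in 0..x, exp (-u ^ 2 / 2)) + 2 * x * exp (-x ^ 2 / 2)) / √(2 * π) := by
  rw [stationarityGap, stdNormalCDF_eq_half_add_div, stdNormalPDF]
  ring

lemma stationarityGap_0_4519_pos : 0 < stationarityGap 0.4519 := by
  have hI := abs_le.1 (abs_integral_exp_neg_half_sq_sub_le (x := 0.4519) (by norm_num)
    (by norm_num))
  have hE := abs_le.1 (abs_exp_neg_half_sq_sub_le (u := 0.4519) (by norm_num))
  have hs := sqrt_two_pi_mem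
  rw [stationarityGap_eq, sub_pos, div_lt_iff₀ (by linarith [hs.1])]
  norm_num at hI hE hs ⊢
  linarith

lemma stationarityGap_0_4525_neg : stationarityGap 0.4525 < 0 := by
  have hI := abs_le.1 (abs_integral_exp_neg_half_sq_sub_le (x := 0.4525) (by norm_num)
    (by norm_num))
  have hE := abs_le.1 (abs_exp_neg_half_sq_sub_le (u := 0.4525) (by norm_num))
  have hs := sqrt_two_pi_mem
  rw [stationarityGap_eq, sub_neg, lt_div_iff₀ (by linarith [hs.1])]
  norm_num at hI hE hs ⊢
  linarith

lemma stdNormalCDF_0_4519_gt : 0.67425 < stdNormalCDF 0.4519 := by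
  have hI := abs_le.1 (abs_integral_exp_neg_half_sq_sub_le (x := 0.4519) (by norm_num)
    (by norm_num))
  have hs := sqrt_two_pi_mem
  rw [stdNormalCDF_eq_half_add_div, ← sub_lt_iff_lt_add', lt_div_iff₀ (by linarith [hs.1])]
  norm_num at hI hs ⊢
  linarith

lemma stdNormalCDF_0_4525_lt : stdNormalCDF 0.4525 < 0.67475 := by
  have hI := abs_le.1 (abs_integral_exp_neg_half_sq_sub_le (x := 0.4525) (by norm_num)
    (by norm_num))
  have hs := sqrt_two_pi_mem
  rw [stdNormalCDF_eq_half_add_div, ← lt_sub_iff_add_lt', div_lt_iff₀ (by linarith [hs.1])]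
  norm_num at hI hs ⊢
  linarith

lemma continuous_effQuantile : Continuous effQuantile := by
  unfold effQuantile; have := continuous_stdNormalCDF; fun_prop

lemma strictMonoOn_effQuantile : StrictMonoOn effQuantile (Ioc 0 0.4519) := by
  refine strictMonoOn_of_deriv_pos (convex_Ioc _ _) continuous_effQuantile.continuousOn
    fun x hx => ?_
  rw [interior_Ioc] at hx
  rw [(hasDerivAt_effQuantile hx.1).deriv]
  have hgap :=
    strictAntiOn_stationarityGap ⟨hx.1.le, by linarith [hx.2]⟩ ⟨by norm_num, by norm_num⟩ hx.2
  exact mul_pos (inv_pos.2 (sqrt_pos.2 hx.1)) (stationarityGap_0_4519_pos.trans hgap)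

lemma strictAntiOn_effQuantile : StrictAntiOn effQuantile (Ici 0.4525) := by
  refine strictAntiOn_of_deriv_neg (convex_Ici _) continuous_effQuantile.continuousOn
    fun x hx => ?_
  rw [interior_Ici] at hx
  have hx₀ : 0 < x := lt_trans (by norm_num) hx
  rw [(hasDerivAt_effQuantile hx₀).deriv]
  refine mul_neg_of_pos_of_neg (inv_pos.2 (sqrt_pos.2 hx₀)) ?_
  rcases le_or_gt x 1 with hx₁ | hx₁
  · exact (strictAntiOn_stationarityGap ⟨by norm_num, by norm_num⟩ ⟨hx₀.le, hx₁⟩ hx).trans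
      stationarityGap_0_4525_neg
  · exact stationarityGap_neg_of_one_lt hx₁

/-- Theorem `cor:opt`: `eff` attains a maximum on `(0,1)`, and
every maximizer `a*` satisfies `0.6505 < a* < 0.6515`; i.e. the asymptotically
optimal HMC acceptance probability, to three decimal places, is `0.651`. -/
theorem stmt_11 :
    (∃ a ∈ Set.Ioo (0:ℝ) 1, ∀ b ∈ Set.Ioo (0:ℝ) 1, eff b ≤ eff a) ∧
    (∀ a ∈ Set.Ioo (0:ℝ) 1, (∀ b ∈ Set.Ioo (0:ℝ) 1, eff b ≤ eff a) →
      0.6505 < a ∧ a < 0.6515) := by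
  have hpq : (0.4519 : ℝ) ≤ 0.4525 := by norm_num
  constructor
  · obtain ⟨x, hx, hmax⟩ := exists_isMaxOn_Ioi_of_strictMonoOn_of_strictAntiOn hpq
      continuous_effQuantile.continuousOn strictMonoOn_effQuantile strictAntiOn_effQuantile
    have hx₀ : 0 < x := lt_of_lt_of_le (by norm_num) hx.1
    exact ⟨_, two_mul_one_sub_stdNormalCDF_mem hx₀, isMaxOn_effQuantile_iff.2 hmax⟩
  · intro a ha hmax
    obtain ⟨x, hx₀, rfl⟩ := exists_two_mul_one_sub_stdNormalCDF_eq ha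
    obtain ⟨hpx, hxq⟩ := mem_Icc_of_isMaxOn_Ioi_of_strictMonoOn_of_strictAntiOn (by norm_num) hpq
      strictMonoOn_effQuantile strictAntiOn_effQuantile hx₀ (isMaxOn_effQuantile_iff.1 hmax)
    have hΦp := strictMono_stdNormalCDF.monotone hpx
    have hΦq := strictMono_stdNormalCDF.monotone hxq
    constructor <;> linarith [stdNormalCDF_0_4519_gt, stdNormalCDF_0_4525_lt]
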